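/- Let (Ω,𝓕) be a measurable space admitting a totally ordered generating class 𝓘 (containing ∅ and Ω, totally ordered by inclusion, σ(𝓘)=𝓕), and let v : 𝓕 → ℝ be submodular. Then for all measurable B ⊆ A, v(B) = sup { μ(B) : μ finite measure on A, μ(A)=v(A), μ(E) ≤ v(E) for all measurable E ⊆ A }, and this supremum is attained. -/

import Mathlib

/-!
Intersecting the generating chain with `B` and with `A` gives a chain `𝒞` of measurable subsets
of `A` running from `∅` through `B` up to `A`. If `e₀ ⊆ e₁ ⊆ ⋯` enumerates finitely many members
of `𝒞`, submodularity shows that the increments `v eᵢ₊₁ - v eᵢ`, summed over any set of atoms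
`eᵢ₊₁ \ eᵢ`, are at most `v` of the union of these atoms. Together with the continuity of `v` from
above this has two consequences. First, the length `D \ C ↦ v D - v C` of chain intervals is
countably subadditive, so Carathéodory's construction yields a finite measure `μ` carried by `A`
with `μ = v` on `𝒞`, in particular `μ B = v B`. Second, `μ (A \ G) ≤ v (A \ G)` whenever `G` is a
countable union of chain intervals; choosing `G ⊇ A \ E` with `μ G` close to `μ (A \ E)` gives
`μ E ≤ v E` for every measurable `E ⊆ A`. So `μ` belongs to the class and attains `v B`, while
every member `ν` of the class has `ν B ≤ v B` by definition.
-/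

open MeasureTheory Set Filter Topology

def IsSubmodular {Ω : Type*} [MeasurableSpace Ω] (v : Set Ω → ℝ) : Prop :=
  v ∅ = 0 ∧
  (∀ A B : Set Ω, MeasurableSet A → MeasurableSet B → A ⊆ B → v A ≤ v B) ∧
  (∀ A : ℕ → Set Ω, (∀ n, MeasurableSet (A n)) → Monotone A →
    Tendsto (fun n => v (A n)) atTop (nhds (v (⋃ n, A n)))) ∧
  (∀ A : ℕ → Set Ω, (∀ n, MeasurableSet (A n)) → Antitone A →
    Tendsto (fun n => v (A n)) atTop (nhds (v (⋂ n, A n)))) ∧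
  (∀ A B : Set Ω, MeasurableSet A → MeasurableSet B →
    v (A ∪ B) + v (A ∩ B) ≤ v A + v B)

def IsSupermodular {Ω : Type*} [MeasurableSpace Ω] (v : Set Ω → ℝ) : Prop :=
  v ∅ = 0 ∧
  (∀ A B : Set Ω, MeasurableSet A → MeasurableSet B → A ⊆ B → v A ≤ v B) ∧
  (∀ A : ℕ → Set Ω, (∀ n, MeasurableSet (A n)) → Monotone A →
    Tendsto (fun n => v (A n)) atTop (nhds (v (⋃ n, A n)))) ∧
  (∀ A : ℕ → Set Ω, (∀ n, MeasurableSet (A n)) → Antitone A →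
    Tendsto (fun n => v (A n)) atTop (nhds (v (⋂ n, A n)))) ∧
  (∀ A B : Set Ω, MeasurableSet A → MeasurableSet B →
    v A + v B ≤ v (A ∪ B) + v (A ∩ B))

open Function
open scoped ENNReal

theorem IsChain.exists_monotone_range_eq {α : Type*} [PartialOrder α] {s : Set α}
    (hs : IsChain (· ≤ ·) s) (hfin : s.Finite) (hne : s.Nonempty) :
    ∃ e : ℕ → α, Monotone e ∧ range e = s := by
  classical
  let := hs.linearOrder
  have := hfin.fintype
  have hn : 0 < Fintype.card s := Fintype.card_pos_iff.2 hne.to_subtype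
  let f := Fintype.orderIsoFinOfCardEq s rfl
  refine ⟨fun i => (f ⟨min i (Fintype.card s - 1), by omega⟩ : α), fun i j hij => ?_, ?_⟩
  · exact f.monotone (Fin.mk_le_mk.2 (min_le_min_right _ hij))
  · refine Subset.antisymm (range_subset_iff.2 fun i => (f _).2) fun x hx => ?_
    obtain ⟨i, hi⟩ := f.surjective ⟨x, hx⟩
    refine ⟨i, (congrArg (fun j => (f j : α)) (Fin.ext ?_)).trans (congrArg Subtype.val hi)⟩
    exact min_eq_left (Nat.le_sub_one_of_lt i.2)

section SetChain

variable {α : Type*} {𝒞 : Set (Set α)}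

theorem IsChain.union_mem (h𝒞 : IsChain (· ⊆ ·) 𝒞) {s t : Set α} (hs : s ∈ 𝒞) (ht : t ∈ 𝒞) :
    s ∪ t ∈ 𝒞 := by
  rcases h𝒞.total hs ht with hst | hts
  · rwa [union_eq_right.2 hst]
  · rwa [union_eq_left.2 hts]

theorem IsChain.inter_mem (h𝒞 : IsChain (· ⊆ ·) 𝒞) {s t : Set α} (hs : s ∈ 𝒞) (ht : t ∈ 𝒞) :
    s ∩ t ∈ 𝒞 := by
  rcases h𝒞.total hs ht with hst | hts
  · rwa [inter_eq_left.2 hst]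
  · rwa [inter_eq_right.2 hts]

theorem exists_finite_subset_endpoints {C D : Set α} (hC : C ∈ 𝒞) (hD : D ∈ 𝒞) {ι : Type*}
    (S : Finset ι) {Cs Ds : ι → Set α} (hCs : ∀ k ∈ S, Cs k ∈ 𝒞) (hDs : ∀ k ∈ S, Ds k ∈ 𝒞) :
    ∃ s ⊆ 𝒞, s.Finite ∧ C ∈ s ∧ D ∈ s ∧ ∀ k ∈ S, Cs k ∈ s ∧ Ds k ∈ s := by
  refine ⟨insert C (insert D (⋃ k ∈ S, {Cs k, Ds k})), ?_,
    ((S.finite_toSet.biUnion fun k _ => toFinite _).insert D).insert C, .inl rfl, .inr (.inl rfl),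
    fun k hk => ⟨.inr (.inr (mem_biUnion hk (by simp))), .inr (.inr (mem_biUnion hk (by simp)))⟩⟩
  refine insert_subset hC (insert_subset hD (iUnion₂_subset fun k hk => ?_))
  exact insert_subset (hCs k hk) (singleton_subset_iff.2 (hDs k hk))

end SetChain

theorem isSetRing_biUnion_finset_of_pairwise_disjoint {α ι : Type*} {a : ι → Set α}
    (ha : Pairwise (Disjoint on a)) : IsSetRing {s | ∃ F : Finset ι, s = ⋃ i ∈ F, a i} where
  empty_mem := ⟨∅, by simp⟩
  union_mem := by
    classical
    rintro _ _ ⟨F, rfl⟩ ⟨G, rfl⟩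
    exact ⟨F ∪ G, (Finset.set_biUnion_union F G a).symm⟩
  sdiff_mem := by
    classical
    rintro _ _ ⟨F, rfl⟩ ⟨G, rfl⟩
    refine ⟨F \ G, Subset.antisymm ?_ ?_⟩
    · rintro x ⟨hxF, hxG⟩
      obtain ⟨i, hi, hx⟩ := mem_iUnion₂.1 hxF
      exact mem_biUnion (Finset.mem_sdiff.2 ⟨hi, fun hiG => hxG (mem_biUnion hiG hx)⟩) hx
    · refine iUnion₂_subset fun i hi x hx => ⟨mem_biUnion (Finset.mem_sdiff.1 hi).1 hx, ?_⟩
      simp only [mem_iUnion, not_exists]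
      intro j hj hxj
      obtain rfl : i = j := by_contra fun hij => (ha hij).ne_of_mem hx hxj rfl
      exact (Finset.mem_sdiff.1 hi).2 hj

namespace Monotone

variable {α : Type*} {e : ℕ → Set α}

theorem pairwise_disjoint_diff_succ (he : Monotone e) :
    Pairwise (Disjoint on fun i => e (i + 1) \ e i) :=
  (pairwise_disjoint_on _).2 fun _ _ hij =>
    disjoint_of_subset_left (sdiff_subset.trans (he hij)) disjoint_sdiff_right

theorem diff_eq_biUnion_Ico (he : Monotone e) (p q : ℕ) :
    e q \ e p = ⋃ i ∈ Finset.Ico p q, e (i + 1) \ e i := by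
  rcases lt_or_ge q p with hqp | hpq
  · rw [sdiff_eq_empty.2 (he hqp.le), Finset.Ico_eq_empty_of_le hqp.le]
    simp
  induction q, hpq using Nat.le_induction with
  | base => simp
  | succ q hpq ih =>
    rw [← Finset.insert_Ico_right_eq_Ico_add_one hpq, Finset.set_biUnion_insert, ← ih,
      sdiff_union_sdiff_cancel (he q.le_succ) (he hpq)]

end Monotone

namespace IsSubmodular

variable {Ω : Type*} [MeasurableSpace Ω] {v : Set Ω → ℝ}

theorem mono (hv : IsSubmodular v) {s t : Set Ω} (hs : MeasurableSet s) (ht : MeasurableSet t)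
    (hst : s ⊆ t) : v s ≤ v t :=
  hv.2.1 s t hs ht hst

theorem nonneg (hv : IsSubmodular v) {s : Set Ω} (hs : MeasurableSet s) : 0 ≤ v s :=
  hv.1 ▸ hv.mono .empty hs (empty_subset s)

theorem sum_sub_le_biUnion (hv : IsSubmodular v) {e : ℕ → Set Ω} (he : Monotone e)
    (hm : ∀ i, MeasurableSet (e i)) (F : Finset ℕ) :
    ∑ i ∈ F, (v (e (i + 1)) - v (e i)) ≤ v (⋃ i ∈ F, e (i + 1) \ e i) := by
  obtain ⟨hv0, -, -, -, hsubmod⟩ := hv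
  induction F using Finset.induction_on_max with
  | empty => simp [hv0]
  | insert a F ha ih =>
    set T := ⋃ i ∈ F, e (i + 1) \ e i
    have hTa : T ⊆ e a := iUnion₂_subset fun i hi => sdiff_subset.trans (he (ha i hi))
    have hT : MeasurableSet T := F.measurableSet_biUnion fun i _ => (hm _).diff (hm i)
    -- the union of `T ∪ (e (a + 1) \ e a)` and `e a` is `e (a + 1)`, their intersection is `T`
    have h := hsubmod (T ∪ (e (a + 1) \ e a)) (e a) (hT.union ((hm _).diff (hm a))) (hm a)
    rw [union_assoc, sdiff_union_self, union_eq_left.2 (he a.le_succ),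
      union_eq_right.2 (hTa.trans (he a.le_succ)), union_inter_distrib_right,
      inter_eq_left.2 hTa, sdiff_inter_self, union_empty] at h
    rw [Finset.sum_insert fun h => (ha a h).false, Finset.set_biUnion_insert, union_comm]
    linarith

theorem tendsto_diff_biUnion_range (hv : IsSubmodular v) {X : Set Ω} (hX : MeasurableSet X)
    {I : ℕ → Set Ω} (hI : ∀ k, MeasurableSet (I k)) :
    Tendsto (fun n => v (X \ ⋃ k ∈ Finset.range n, I k)) atTop (𝓝 (v (X \ ⋃ k, I k))) := by
  have h := hv.2.2.2.1 _ (fun n => hX.diff (Finset.measurableSet_biUnion _ fun k _ => hI k))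
    fun m n hmn => sdiff_subset_sdiff_right
      (biUnion_subset_biUnion_left (Finset.coe_subset.2 (Finset.range_mono hmn)))
  have hU : ⋃ n, ⋃ k ∈ Finset.range n, I k = ⋃ k, I k := by
    ext x
    simp only [mem_iUnion, Finset.mem_range, exists_prop]
    exact ⟨fun ⟨_, k, _, hk⟩ => ⟨k, hk⟩, fun ⟨k, hk⟩ => ⟨k + 1, k, k.lt_succ_self, hk⟩⟩
  rwa [← sdiff_iUnion, hU] at h

end IsSubmodular

section Atoms

variable {Ω : Type*} [MeasurableSpace Ω] {e : ℕ → Set Ω}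

theorem measure_biUnion_diff_succ (he : Monotone e) (hm : ∀ i, MeasurableSet (e i)) {w : ℕ → ℝ}
    (hw : Monotone w) {μ : Measure Ω}
    (hμ : ∀ i, μ (e (i + 1) \ e i) = ENNReal.ofReal (w (i + 1) - w i)) (F : Finset ℕ) :
    μ (⋃ i ∈ F, e (i + 1) \ e i) = ENNReal.ofReal (∑ i ∈ F, (w (i + 1) - w i)) := by
  rw [measure_biUnion_finset (fun i _ j _ hij => he.pairwise_disjoint_diff_succ hij)
      fun i _ => (hm _).diff (hm i),
    ENNReal.ofReal_sum_of_nonneg fun i _ => sub_nonneg.2 (hw i.le_succ)]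
  exact Finset.sum_congr rfl fun i _ => hμ i

theorem exists_measure_diff_succ_eq (he : Monotone e) (hm : ∀ i, MeasurableSet (e i))
    (w : Set Ω → ℝ) :
    ∃ ρ : Measure Ω, ∀ i, ρ (e (i + 1) \ e i) = ENNReal.ofReal (w (e (i + 1)) - w (e i)) := by
  classical
  let x (i : ℕ) : Measure Ω :=
    if h : (e (i + 1) \ e i).Nonempty then Measure.dirac h.some else 0
  refine ⟨Measure.sum fun j => ENNReal.ofReal (w (e (j + 1)) - w (e j)) • x j, fun i => ?_⟩
  rw [Measure.sum_apply _ ((hm _).diff (hm i)), tsum_eq_single i fun j hji => ?_]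
  · by_cases h : (e (i + 1) \ e i).Nonempty
    · simp [x, h, Measure.dirac_apply' _ ((hm _).diff (hm i)), indicator_of_mem h.some_mem]
    · have : e (i + 1) = e i :=
        (sdiff_eq_empty.1 (not_nonempty_iff_eq_empty.1 h)).antisymm (he i.le_succ)
      simp [this]
  · by_cases h : (e (j + 1) \ e j).Nonempty
    · simp [x, h, Measure.dirac_apply' _ ((hm _).diff (hm i)),
        indicator_of_notMem ((he.pairwise_disjoint_diff_succ hji).notMem_of_mem_left h.some_mem)]
    · simp [x, h]

end Atoms

section ChainIntervals

variable {Ω : Type*} [MeasurableSpace Ω] {v : Set Ω → ℝ} {𝒞 : Set (Set Ω)}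

theorem IsChain.exists_measure_diff_eq_of_finite (h𝒞 : IsChain (· ⊆ ·) 𝒞) (hfin : 𝒞.Finite)
    (hv : IsSubmodular v) (hm : ∀ s ∈ 𝒞, MeasurableSet s) :
    ∃ ρ : Measure Ω, ∀ C ∈ 𝒞, ∀ D ∈ 𝒞, C ⊆ D → ρ (D \ C) = ENNReal.ofReal (v D - v C) := by
  rcases 𝒞.eq_empty_or_nonempty with rfl | hne
  · exact ⟨0, by simp⟩
  obtain ⟨e, he, hrange⟩ := h𝒞.exists_monotone_range_eq hfin hne
  have hem : ∀ i, MeasurableSet (e i) := fun i => hm _ (hrange ▸ mem_range_self i)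
  obtain ⟨ρ, hρ⟩ := exists_measure_diff_succ_eq he hem v
  refine ⟨ρ, ?_⟩
  rw [← hrange]
  rintro _ ⟨p, rfl⟩ _ ⟨q, rfl⟩ hpq
  rcases le_total p q with hpq' | hqp
  · rw [he.diff_eq_biUnion_Ico, measure_biUnion_diff_succ he hem
      (fun i j hij => hv.mono (hem i) (hem j) (he hij)) hρ,
      Finset.sum_Ico_sub (fun i => v (e i)) hpq']
  · rw [(he hqp).antisymm hpq]
    simp

theorem measure_diff_biUnion_le (hv : IsSubmodular v) (h𝒞 : IsChain (· ⊆ ·) 𝒞)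
    (hm : ∀ s ∈ 𝒞, MeasurableSet s) {μ : Measure Ω}
    (hμ : ∀ C ∈ 𝒞, ∀ D ∈ 𝒞, C ⊆ D → μ (D \ C) = ENNReal.ofReal (v D - v C))
    {C D : Set Ω} (hC : C ∈ 𝒞) (hD : D ∈ 𝒞) {ι : Type*} (S : Finset ι)
    {Cs Ds : ι → Set Ω} (hCs : ∀ k ∈ S, Cs k ∈ 𝒞) (hDs : ∀ k ∈ S, Ds k ∈ 𝒞) :
    μ ((D \ C) \ ⋃ k ∈ S, (Ds k \ Cs k)) ≤
      ENNReal.ofReal (v ((D \ C) \ ⋃ k ∈ S, (Ds k \ Cs k))) := by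
  obtain ⟨s, hs𝒞, hfin, hCmem, hDmem, hpair⟩ := exists_finite_subset_endpoints hC hD S hCs hDs
  obtain ⟨e, he, hrange⟩ := (h𝒞.mono hs𝒞).exists_monotone_range_eq hfin ⟨C, hCmem⟩
  have he𝒞 : ∀ i, e i ∈ 𝒞 := fun i => hs𝒞 (hrange ▸ mem_range_self i)
  have hem : ∀ i, MeasurableSet (e i) := fun i => hm _ (he𝒞 i)
  -- the set is a finite union of atoms `e (i + 1) \ e i`
  have hR := isSetRing_biUnion_finset_of_pairwise_disjoint he.pairwise_disjoint_diff_succ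
  have hdiff : ∀ X ∈ s, ∀ Y ∈ s, Y \ X ∈ {s | ∃ F : Finset ℕ, s = ⋃ i ∈ F, e (i + 1) \ e i} := by
    rw [← hrange]
    rintro _ ⟨p, rfl⟩ _ ⟨q, rfl⟩
    exact ⟨_, he.diff_eq_biUnion_Ico p q⟩
  obtain ⟨F, hF⟩ := hR.sdiff_mem (hdiff C hCmem D hDmem)
    (hR.biUnion_mem S fun k hk => hdiff _ (hpair k hk).1 _ (hpair k hk).2)
  rw [hF, measure_biUnion_diff_succ he hem (fun i j hij => hv.mono (hem i) (hem j) (he hij))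
    fun i => hμ _ (he𝒞 i) _ (he𝒞 (i + 1)) (he i.le_succ)]
  exact ENNReal.ofReal_le_ofReal (hv.sum_sub_le_biUnion he hem F)

theorem measure_diff_iUnion_le (hv : IsSubmodular v) (h𝒞 : IsChain (· ⊆ ·) 𝒞)
    (hm : ∀ s ∈ 𝒞, MeasurableSet s) {μ : Measure Ω}
    (hμ : ∀ C ∈ 𝒞, ∀ D ∈ 𝒞, C ⊆ D → μ (D \ C) = ENNReal.ofReal (v D - v C))
    {C D : Set Ω} (hC : C ∈ 𝒞) (hD : D ∈ 𝒞) {Cs Ds : ℕ → Set Ω} (hCs : ∀ k, Cs k ∈ 𝒞)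
    (hDs : ∀ k, Ds k ∈ 𝒞) :
    μ ((D \ C) \ ⋃ k, (Ds k \ Cs k)) ≤ ENNReal.ofReal (v ((D \ C) \ ⋃ k, (Ds k \ Cs k))) :=
  ge_of_tendsto' (ENNReal.tendsto_ofReal (hv.tendsto_diff_biUnion_range
      ((hm D hD).diff (hm C hC)) fun k => (hm _ (hDs k)).diff (hm _ (hCs k)))) fun n =>
    (measure_mono (sdiff_subset_sdiff_right
      (iUnion₂_subset fun k _ => subset_iUnion (fun k => Ds k \ Cs k) k))).trans
    (measure_diff_biUnion_le hv h𝒞 hm hμ hC hD (Finset.range n) (fun k _ => hCs k)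
      fun k _ => hDs k)

theorem IsSubmodular.sub_le_sum_add_diff (hv : IsSubmodular v) (h𝒞 : IsChain (· ⊆ ·) 𝒞)
    (hm : ∀ s ∈ 𝒞, MeasurableSet s) {C D : Set Ω} (hC : C ∈ 𝒞) (hD : D ∈ 𝒞) (hCD : C ⊆ D)
    {ι : Type*} (S : Finset ι) {Cs Ds : ι → Set Ω} (hCs : ∀ k ∈ S, Cs k ∈ 𝒞)
    (hDs : ∀ k ∈ S, Ds k ∈ 𝒞) (hCDs : ∀ k ∈ S, Cs k ⊆ Ds k) :
    v D - v C ≤ ∑ k ∈ S, (v (Ds k) - v (Cs k)) + v ((D \ C) \ ⋃ k ∈ S, (Ds k \ Cs k)) := by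
  obtain ⟨s, hs𝒞, hfin, hCmem, hDmem, hpair⟩ := exists_finite_subset_endpoints hC hD S hCs hDs
  have hsm : ∀ t ∈ s, MeasurableSet t := fun t ht => hm t (hs𝒞 ht)
  obtain ⟨ρ, hρ⟩ := (h𝒞.mono hs𝒞).exists_measure_diff_eq_of_finite hfin hv hsm
  set U := ⋃ k ∈ S, (Ds k \ Cs k)
  have hT := measure_diff_biUnion_le hv (h𝒞.mono hs𝒞) hsm hρ hCmem hDmem S
    (fun k hk => (hpair k hk).1) fun k hk => (hpair k hk).2
  have hinc : ∀ k ∈ S, 0 ≤ v (Ds k) - v (Cs k) := fun k hk =>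
    sub_nonneg.2 (hv.mono (hm _ (hCs k hk)) (hm _ (hDs k hk)) (hCDs k hk))
  have hTnn : 0 ≤ v ((D \ C) \ U) := hv.nonneg (((hm D hD).diff (hm C hC)).diff
    (S.measurableSet_biUnion fun k hk => (hm _ (hDs k hk)).diff (hm _ (hCs k hk))))
  rw [← ENNReal.ofReal_le_ofReal_iff (add_nonneg (Finset.sum_nonneg hinc) hTnn),
    ENNReal.ofReal_add (Finset.sum_nonneg hinc) hTnn, ENNReal.ofReal_sum_of_nonneg hinc,
    ← hρ C hCmem D hDmem hCD]
  calc ρ (D \ C) ≤ ρ (U ∪ (D \ C) \ U) := measure_mono (sdiff_subset_iff.1 subset_rfl)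
    _ ≤ ∑ k ∈ S, ρ (Ds k \ Cs k) + ρ ((D \ C) \ U) :=
      (measure_union_le _ _).trans (add_le_add_left (measure_biUnion_finset_le _ _) _)
    _ ≤ _ := add_le_add (Finset.sum_le_sum fun k hk =>
      (hρ _ (hpair k hk).1 _ (hpair k hk).2 (hCDs k hk)).le) hT

theorem IsSubmodular.ofReal_sub_le_tsum (hv : IsSubmodular v) (h𝒞 : IsChain (· ⊆ ·) 𝒞)
    (hm : ∀ s ∈ 𝒞, MeasurableSet s) {C D : Set Ω} (hC : C ∈ 𝒞) (hD : D ∈ 𝒞) (hCD : C ⊆ D)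
    {Cs Ds : ℕ → Set Ω} (hCs : ∀ k, Cs k ∈ 𝒞) (hDs : ∀ k, Ds k ∈ 𝒞) (hCDs : ∀ k, Cs k ⊆ Ds k)
    (hcover : D \ C ⊆ ⋃ k, (Ds k \ Cs k)) :
    ENNReal.ofReal (v D - v C) ≤ ∑' k, ENNReal.ofReal (v (Ds k) - v (Cs k)) := by
  have hrest := hv.tendsto_diff_biUnion_range ((hm D hD).diff (hm C hC))
    fun k => (hm _ (hDs k)).diff (hm _ (hCs k))
  rw [sdiff_eq_empty.2 hcover, hv.1] at hrest
  have hlim := (ENNReal.tendsto_ofReal hrest).const_add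
    (∑' k, ENNReal.ofReal (v (Ds k) - v (Cs k)))
  rw [ENNReal.ofReal_zero, add_zero] at hlim
  refine ge_of_tendsto' hlim fun n => ?_
  have hinc : ∀ k ∈ Finset.range n, 0 ≤ v (Ds k) - v (Cs k) := fun k _ =>
    sub_nonneg.2 (hv.mono (hm _ (hCs k)) (hm _ (hDs k)) (hCDs k))
  calc ENNReal.ofReal (v D - v C)
      ≤ ENNReal.ofReal (∑ k ∈ Finset.range n, (v (Ds k) - v (Cs k)) +
          v ((D \ C) \ ⋃ k ∈ Finset.range n, (Ds k \ Cs k))) :=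
        ENNReal.ofReal_le_ofReal (hv.sub_le_sum_add_diff h𝒞 hm hC hD hCD _
          (fun k _ => hCs k) (fun k _ => hDs k) fun k _ => hCDs k)
    _ ≤ ∑ k ∈ Finset.range n, ENNReal.ofReal (v (Ds k) - v (Cs k)) +
          ENNReal.ofReal (v ((D \ C) \ ⋃ k ∈ Finset.range n, (Ds k \ Cs k))) := by
        rw [← ENNReal.ofReal_sum_of_nonneg hinc]
        exact ENNReal.ofReal_add_le
    _ ≤ _ := add_le_add_left (ENNReal.sum_le_tsum _) _

theorem measure_add_measure_diff_le (hv : IsSubmodular v) (h𝒞 : IsChain (· ⊆ ·) 𝒞)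
    (hm : ∀ s ∈ 𝒞, MeasurableSet s) {μ : Measure Ω}
    (hμ : ∀ C ∈ 𝒞, ∀ D ∈ 𝒞, C ⊆ D → μ (D \ C) = ENNReal.ofReal (v D - v C))
    {A : Set Ω} (hemp : ∅ ∈ 𝒞) (hA : A ∈ 𝒞) {E : Set Ω} (hE : MeasurableSet E) (hEA : E ⊆ A)
    {Cs Ds : ℕ → Set Ω} (hCs : ∀ k, Cs k ∈ 𝒞) (hDs : ∀ k, Ds k ∈ 𝒞)
    (hcov : A \ E ⊆ ⋃ k, (Ds k \ Cs k)) :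
    μ E + μ (A \ E) ≤ ENNReal.ofReal (v E) + μ (⋃ k, (Ds k \ Cs k)) := by
  set G := ⋃ k, (Ds k \ Cs k)
  have hG : MeasurableSet G := .iUnion fun k => (hm _ (hDs k)).diff (hm _ (hCs k))
  have hAG : μ (A \ G) ≤ ENNReal.ofReal (v (A \ G)) := by
    simpa using measure_diff_iUnion_le hv h𝒞 hm hμ hemp hA hCs hDs
  have hvAG : v (A \ G) ≤ v E := hv.mono ((hm A hA).diff hG) hE fun x hx =>
    by_contra fun hxE => hx.2 (hcov ⟨hx.1, hxE⟩)
  calc μ E + μ (A \ E) = μ (E \ G) + μ (E ∩ G ∪ A \ E) := by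
        rw [measure_union (disjoint_sdiff_right.mono_left inter_subset_left) ((hm A hA).diff hE),
          ← measure_inter_add_sdiff E hG]
        ring
    _ ≤ μ (A \ G) + μ G := add_le_add (measure_mono (sdiff_subset_sdiff_left hEA))
        (measure_mono (union_subset inter_subset_right hcov))
    _ ≤ ENNReal.ofReal (v E) + μ G :=
        add_le_add (hAG.trans (ENNReal.ofReal_le_ofReal hvAG)) le_rfl

end ChainIntervals

section ChainCover

variable {Ω : Type*} {v : Set Ω → ℝ} {A : Set Ω} {𝒞 : Set (Set Ω)}

/-- The cost of covering `s ∩ A` by a single interval `D \ C` of `𝒞`; points outside `A` cost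
nothing, so that the measure built from it is carried by `A`. -/
noncomputable def chainCover (v : Set Ω → ℝ) (A : Set Ω) (𝒞 : Set (Set Ω)) (s : Set Ω) : ℝ≥0∞ :=
  ⨅ C ∈ 𝒞, ⨅ D ∈ 𝒞, ⨅ (_ : C ⊆ D) (_ : s ∩ A ⊆ D \ C), ENNReal.ofReal (v D - v C)

theorem chainCover_le {s C D : Set Ω} (hC : C ∈ 𝒞) (hD : D ∈ 𝒞) (hCD : C ⊆ D)
    (hs : s ∩ A ⊆ D \ C) : chainCover v A 𝒞 s ≤ ENNReal.ofReal (v D - v C) :=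
  iInf₂_le_of_le C hC <| iInf₂_le_of_le D hD <| iInf₂_le_of_le hCD hs le_rfl

theorem chainCover_mono : Monotone (chainCover v A 𝒞) := fun _ _ hst =>
  le_iInf₂ fun _ hC => le_iInf₂ fun _ hD => le_iInf₂ fun hCD ht =>
    chainCover_le hC hD hCD ((inter_subset_inter_left A hst).trans ht)

theorem chainCover_eq_zero (hemp : ∅ ∈ 𝒞) (hv0 : v ∅ = 0) {s : Set Ω} (hs : s ∩ A = ∅) :
    chainCover v A 𝒞 s = 0 :=
  nonpos_iff_eq_zero.1 <| (chainCover_le hemp hemp subset_rfl (by simp [hs])).trans (by simp [hv0])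

theorem exists_lt_of_chainCover_lt {s : Set Ω} {r : ℝ≥0∞} (h : chainCover v A 𝒞 s < r) :
    ∃ C ∈ 𝒞, ∃ D ∈ 𝒞, C ⊆ D ∧ s ∩ A ⊆ D \ C ∧ ENNReal.ofReal (v D - v C) < r := by
  simp only [chainCover, iInf_lt_iff] at h
  obtain ⟨C, hC, D, hD, hCD, hs, h⟩ := h
  exact ⟨C, hC, D, hD, hCD, hs, h⟩

theorem exists_cover_lt_of_ofFunction_chainCover_lt (h0 : chainCover v A 𝒞 ∅ = 0) {s : Set Ω}
    {r : ℝ≥0∞} (h : OuterMeasure.ofFunction (chainCover v A 𝒞) h0 s < r) :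
    ∃ Cs Ds : ℕ → Set Ω, (∀ k, Cs k ∈ 𝒞) ∧ (∀ k, Ds k ∈ 𝒞) ∧ (∀ k, Cs k ⊆ Ds k) ∧
      s ∩ A ⊆ ⋃ k, (Ds k \ Cs k) ∧ ∑' k, ENNReal.ofReal (v (Ds k) - v (Cs k)) < r := by
  obtain ⟨t, hst, ht⟩ : ∃ t : ℕ → Set Ω, s ⊆ ⋃ n, t n ∧ ∑' n, chainCover v A 𝒞 (t n) < r := by
    simpa [OuterMeasure.ofFunction_apply, iInf_lt_iff] using h
  obtain ⟨ε, hε, hεr⟩ := ENNReal.lt_iff_exists_add_pos_lt.1 ht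
  obtain ⟨δ, hδ, hδε⟩ := ENNReal.exists_pos_sum_of_countable (ENNReal.coe_ne_zero.2 hε.ne') ℕ
  have hcov (n : ℕ) : ∃ C ∈ 𝒞, ∃ D ∈ 𝒞, C ⊆ D ∧ t n ∩ A ⊆ D \ C ∧
      ENNReal.ofReal (v D - v C) < chainCover v A 𝒞 (t n) + δ n := by
    have hfin : chainCover v A 𝒞 (t n) ≠ ⊤ :=
      ne_top_of_le_ne_top (ht.trans_le le_top).ne (ENNReal.le_tsum n)
    exact exists_lt_of_chainCover_lt
      (ENNReal.lt_add_right hfin (ENNReal.coe_ne_zero.2 (hδ n).ne'))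
  choose Cs hCs Ds hDs hCDs hcov hlt using hcov
  refine ⟨Cs, Ds, hCs, hDs, hCDs, fun x hx => ?_, ?_⟩
  · obtain ⟨n, hn⟩ := mem_iUnion.1 (hst hx.1)
    exact mem_iUnion.2 ⟨n, hcov n ⟨hn, hx.2⟩⟩
  · calc ∑' k, ENNReal.ofReal (v (Ds k) - v (Cs k))
        ≤ ∑' k, (chainCover v A 𝒞 (t k) + δ k) := ENNReal.tsum_le_tsum fun k => (hlt k).le
      _ = ∑' k, chainCover v A 𝒞 (t k) + ∑' k, (δ k : ℝ≥0∞) := ENNReal.tsum_add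
      _ < r := (add_le_add le_rfl hδε.le).trans_lt hεr

theorem isCaratheodory_ofFunction_chainCover_of_inter_eq_empty (h0 : chainCover v A 𝒞 ∅ = 0)
    (hemp : ∅ ∈ 𝒞) (hv0 : v ∅ = 0) {s : Set Ω} (hs : s ∩ A = ∅) :
    MeasurableSet[(OuterMeasure.ofFunction (chainCover v A 𝒞) h0).caratheodory] s :=
  OuterMeasure.ofFunction_caratheodory fun t => by
    rw [chainCover_eq_zero hemp hv0 (by rw [inter_assoc, hs, inter_empty]), zero_add]
    exact chainCover_mono sdiff_subset

end ChainCover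

section ChainMeasure

variable {Ω : Type*} [MeasurableSpace Ω] {v : Set Ω → ℝ} {A : Set Ω} {𝒞 : Set (Set Ω)}

theorem ofFunction_chainCover_diff (h0 : chainCover v A 𝒞 ∅ = 0) (hv : IsSubmodular v)
    (h𝒞 : IsChain (· ⊆ ·) 𝒞) (hm : ∀ s ∈ 𝒞, MeasurableSet s) (hsub : ∀ s ∈ 𝒞, s ⊆ A)
    {C D : Set Ω} (hC : C ∈ 𝒞) (hD : D ∈ 𝒞) (hCD : C ⊆ D) :
    OuterMeasure.ofFunction (chainCover v A 𝒞) h0 (D \ C) = ENNReal.ofReal (v D - v C) := by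
  refine le_antisymm ((OuterMeasure.ofFunction_le _).trans
    (chainCover_le hC hD hCD inter_subset_left)) (le_of_forall_gt fun r hr => ?_)
  obtain ⟨Cs, Ds, hCs, hDs, hCDs, hcov, hlt⟩ := exists_cover_lt_of_ofFunction_chainCover_lt h0 hr
  rw [inter_eq_left.2 (sdiff_subset.trans (hsub D hD))] at hcov
  exact (hv.ofReal_sub_le_tsum h𝒞 hm hC hD hCD hCs hDs hCDs hcov).trans_lt hlt

theorem isCaratheodory_ofFunction_chainCover_of_mem (h0 : chainCover v A 𝒞 ∅ = 0)
    (hv : IsSubmodular v) (h𝒞 : IsChain (· ⊆ ·) 𝒞) (hm : ∀ s ∈ 𝒞, MeasurableSet s)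
    {E : Set Ω} (hE : E ∈ 𝒞) :
    MeasurableSet[(OuterMeasure.ofFunction (chainCover v A 𝒞) h0).caratheodory] E := by
  refine OuterMeasure.ofFunction_caratheodory fun t =>
    le_iInf₂ fun C hC => le_iInf₂ fun D hD => le_iInf₂ fun hCD ht => ?_
  -- `E` cuts the interval `D \ C` into two intervals of the chain, meeting at `M`
  set M := (E ∪ C) ∩ D
  have hM : M ∈ 𝒞 := h𝒞.inter_mem (h𝒞.union_mem hE hC) hD
  have hCM : C ⊆ M := subset_inter subset_union_right hCD
  have hMD : M ⊆ D := inter_subset_right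
  calc chainCover v A 𝒞 (t ∩ E) + chainCover v A 𝒞 (t \ E)
      ≤ ENNReal.ofReal (v M - v C) + ENNReal.ofReal (v D - v M) := by
        refine add_le_add (chainCover_le hC hM hCM fun x hx => ?_)
          (chainCover_le hM hD hMD fun x hx => ?_)
        · have hx' := ht ⟨hx.1.1, hx.2⟩
          exact ⟨⟨.inl hx.1.2, hx'.1⟩, hx'.2⟩
        · have hx' := ht ⟨hx.1.1, hx.2⟩
          exact ⟨hx'.1, fun hxM => hxM.1.elim hx.1.2 hx'.2⟩
    _ = ENNReal.ofReal (v D - v C) := by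
        rw [← ENNReal.ofReal_add (sub_nonneg.2 (hv.mono (hm C hC) (hm M hM) hCM))
          (sub_nonneg.2 (hv.mono (hm M hM) (hm D hD) hMD)), sub_add_sub_cancel']

theorem measure_le_of_eq_ofFunction_chainCover (h0 : chainCover v A 𝒞 ∅ = 0)
    (hv : IsSubmodular v) (h𝒞 : IsChain (· ⊆ ·) 𝒞) (hm : ∀ s ∈ 𝒞, MeasurableSet s)
    (hemp : ∅ ∈ 𝒞) (hA : A ∈ 𝒞) (hsub : ∀ s ∈ 𝒞, s ⊆ A) {μ : Measure Ω} [IsFiniteMeasure μ]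
    (hμ : ∀ s, MeasurableSet s → μ s = OuterMeasure.ofFunction (chainCover v A 𝒞) h0 s)
    {E : Set Ω} (hE : MeasurableSet E) (hEA : E ⊆ A) : μ E ≤ ENNReal.ofReal (v E) := by
  have hdiff : ∀ C ∈ 𝒞, ∀ D ∈ 𝒞, C ⊆ D → μ (D \ C) = ENNReal.ofReal (v D - v C) :=
    fun C hC D hD hCD => (hμ _ ((hm D hD).diff (hm C hC))).trans
      (ofFunction_chainCover_diff h0 hv h𝒞 hm hsub hC hD hCD)
  refine ENNReal.le_of_forall_pos_le_add fun ε hε _ => ?_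
  -- cover `A \ E` by chain intervals of total length below `μ (A \ E) + ε`
  have hlt : OuterMeasure.ofFunction (chainCover v A 𝒞) h0 (A \ E) < μ (A \ E) + ε := by
    rw [← hμ _ ((hm A hA).diff hE)]
    exact ENNReal.lt_add_right (measure_ne_top μ _) (ENNReal.coe_ne_zero.2 hε.ne')
  obtain ⟨Cs, Ds, hCs, hDs, hCDs, hcov, hsum⟩ :=
    exists_cover_lt_of_ofFunction_chainCover_lt h0 hlt
  rw [inter_eq_left.2 sdiff_subset] at hcov
  have hG : μ (⋃ k, (Ds k \ Cs k)) ≤ μ (A \ E) + ε := (measure_iUnion_le _).trans <| by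
    simpa only [hdiff _ (hCs _) _ (hDs _) (hCDs _)] using hsum.le
  refine ENNReal.le_of_add_le_add_right (measure_ne_top μ (A \ E)) ?_
  calc μ E + μ (A \ E) ≤ ENNReal.ofReal (v E) + μ (⋃ k, (Ds k \ Cs k)) :=
        measure_add_measure_diff_le hv h𝒞 hm hdiff hemp hA hE hEA hCs hDs hcov
    _ ≤ ENNReal.ofReal (v E) + ε + μ (A \ E) := by
        rw [add_assoc, add_comm (ε : ℝ≥0∞)]
        exact add_le_add le_rfl hG

theorem exists_measure_of_chain (hv : IsSubmodular v) (h𝒞 : IsChain (· ⊆ ·) 𝒞)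
    (hm : ∀ s ∈ 𝒞, MeasurableSet s) (hemp : ∅ ∈ 𝒞) (hA : A ∈ 𝒞) (hsub : ∀ s ∈ 𝒞, s ⊆ A)
    (hgen : ‹MeasurableSpace Ω› ≤ MeasurableSpace.generateFrom (𝒞 ∪ {s | s ∩ A = ∅})) :
    ∃ μ : Measure Ω, IsFiniteMeasure μ ∧ μ.restrict A = μ ∧
      (∀ C ∈ 𝒞, μ C = ENNReal.ofReal (v C)) ∧
      ∀ E, MeasurableSet E → E ⊆ A → μ E ≤ ENNReal.ofReal (v E) := by
  have h0 : chainCover v A 𝒞 ∅ = 0 := chainCover_eq_zero hemp hv.1 (empty_inter A)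
  set μo := OuterMeasure.ofFunction (chainCover v A 𝒞) h0
  have hle : ‹MeasurableSpace Ω› ≤ μo.caratheodory := hgen.trans <|
    MeasurableSpace.generateFrom_le fun s hs => hs.elim
      (isCaratheodory_ofFunction_chainCover_of_mem h0 hv h𝒞 hm)
      (isCaratheodory_ofFunction_chainCover_of_inter_eq_empty h0 hemp hv.1)
  set μ := μo.toMeasure hle
  have hμ : ∀ C ∈ 𝒞, μ C = ENNReal.ofReal (v C) := fun C hC => by
    simpa [hv.1] using (toMeasure_apply _ hle ((hm C hC).diff .empty)).trans
      (ofFunction_chainCover_diff h0 hv h𝒞 hm hsub hemp hC (empty_subset C))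
  have hμA : μ Aᶜ = 0 := (toMeasure_apply _ _ (hm A hA).compl).trans <| nonpos_iff_eq_zero.1 <|
    (OuterMeasure.ofFunction_le _).trans (chainCover_eq_zero hemp hv.1 (compl_inter_self A)).le
  have : IsFiniteMeasure μ := ⟨by
    rw [← measure_add_measure_compl (hm A hA), hμA, add_zero, hμ A hA]
    exact ENNReal.ofReal_lt_top⟩
  exact ⟨μ, this, Measure.restrict_eq_self_of_ae_mem (mem_ae_iff.2 hμA), hμ,
    fun E => measure_le_of_eq_ofFunction_chainCover h0 hv h𝒞 hm hemp hA hsub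
      fun s hs => toMeasure_apply _ hle hs⟩

end ChainMeasure

section SplitChain

variable {Ω : Type*} {I : Set (Set Ω)} {A B : Set Ω}

def splitChain (I : Set (Set Ω)) (A B : Set Ω) : Set (Set Ω) :=
  (· ∩ B) '' I ∪ (fun J => B ∪ J ∩ A) '' I

theorem isChain_splitChain (hI : IsChain (· ⊆ ·) I) : IsChain (· ⊆ ·) (splitChain I A B) := by
  rintro _ (⟨J, hJ, rfl⟩ | ⟨J, hJ, rfl⟩) _ (⟨J', hJ', rfl⟩ | ⟨J', hJ', rfl⟩) -
  · exact (hI.total hJ hJ').imp (inter_subset_inter_left B) (inter_subset_inter_left B)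
  · exact .inl (inter_subset_right.trans subset_union_left)
  · exact .inr (inter_subset_right.trans subset_union_left)
  · exact (hI.total hJ hJ').imp (fun h => union_subset_union_right B (inter_subset_inter_left A h))
      fun h => union_subset_union_right B (inter_subset_inter_left A h)

theorem subset_of_mem_splitChain (hBA : B ⊆ A) : ∀ s ∈ splitChain I A B, s ⊆ A := by
  rintro _ (⟨J, -, rfl⟩ | ⟨J, -, rfl⟩)
  · exact inter_subset_right.trans hBA
  · exact union_subset hBA inter_subset_right

theorem measurableSet_of_mem_splitChain [MeasurableSpace Ω] (hI : ∀ J ∈ I, MeasurableSet J)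
    (hA : MeasurableSet A) (hB : MeasurableSet B) : ∀ s ∈ splitChain I A B, MeasurableSet s := by
  rintro _ (⟨J, hJ, rfl⟩ | ⟨J, hJ, rfl⟩)
  · exact (hI J hJ).inter hB
  · exact hB.union ((hI J hJ).inter hA)

theorem empty_mem_splitChain (h0 : ∅ ∈ I) : ∅ ∈ splitChain I A B :=
  .inl ⟨∅, h0, empty_inter B⟩

theorem split_mem_splitChain (hU : univ ∈ I) : B ∈ splitChain I A B :=
  .inl ⟨univ, hU, univ_inter B⟩

theorem top_mem_splitChain (hU : univ ∈ I) (hBA : B ⊆ A) : A ∈ splitChain I A B :=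
  .inr ⟨univ, hU, by simp [union_eq_right.2 hBA]⟩

theorem generateFrom_le_splitChain (hU : univ ∈ I) :
    MeasurableSpace.generateFrom I ≤
      MeasurableSpace.generateFrom (splitChain I A B ∪ {s | s ∩ A = ∅}) := by
  refine MeasurableSpace.generateFrom_le fun J hJ => ?_
  have hmeas := fun s (hs : s ∈ splitChain I A B ∪ {s | s ∩ A = ∅}) =>
    MeasurableSpace.measurableSet_generateFrom hs
  have hJ' : J = J ∩ B ∪ (B ∪ J ∩ A) \ B ∪ J \ A := by
    ext x
    by_cases hxA : x ∈ A <;> by_cases hxB : x ∈ B <;> simp [hxA, hxB]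
  rw [hJ']
  exact ((hmeas _ (.inl (.inl ⟨J, hJ, rfl⟩))).union ((hmeas _ (.inl (.inr ⟨J, hJ, rfl⟩))).diff
    (hmeas _ (.inl (split_mem_splitChain hU))))).union (hmeas _ (.inr sdiff_inter_self))

end SplitChain

theorem submodular_sup_representation {Ω : Type*} [m : MeasurableSpace Ω]
    (I : Set (Set Ω)) (h0 : ∅ ∈ I) (hU : Set.univ ∈ I)
    (hchain : ∀ I₁ ∈ I, ∀ I₂ ∈ I, I₁ ⊆ I₂ ∨ I₂ ⊆ I₁)
    (hgen : MeasurableSpace.generateFrom I = m)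
    (v : Set Ω → ℝ) (hv : IsSubmodular v)
    (A B : Set Ω) (hA : MeasurableSet A) (hB : MeasurableSet B) (hBA : B ⊆ A) :
    v B = sSup {x : ℝ | ∃ μ : Measure Ω, μ.restrict A = μ ∧ IsFiniteMeasure μ ∧
        (μ A).toReal = v A ∧
        (∀ E : Set Ω, MeasurableSet E → E ⊆ A → (μ E).toReal ≤ v E) ∧
        x = (μ B).toReal} ∧
    ∃ μ : Measure Ω, μ.restrict A = μ ∧ IsFiniteMeasure μ ∧
      (μ A).toReal = v A ∧
      (∀ E : Set Ω, MeasurableSet E → E ⊆ A → (μ E).toReal ≤ v E) ∧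
      (μ B).toReal = v B := by
  have hI : ∀ J ∈ I, MeasurableSet J := fun J hJ => hgen ▸ .basic J hJ
  obtain ⟨μ, hfin, hrestr, hμ, hle⟩ := exists_measure_of_chain hv
    (isChain_splitChain fun J hJ J' hJ' _ => hchain J hJ J' hJ')
    (measurableSet_of_mem_splitChain hI hA hB) (empty_mem_splitChain h0)
    (top_mem_splitChain hU hBA) (subset_of_mem_splitChain hBA)
    (hgen ▸ generateFrom_le_splitChain hU)
  have hμA : (μ A).toReal = v A := by
    rw [hμ A (top_mem_splitChain hU hBA), ENNReal.toReal_ofReal (hv.nonneg hA)]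
  have hμB : (μ B).toReal = v B := by
    rw [hμ B (split_mem_splitChain hU), ENNReal.toReal_ofReal (hv.nonneg hB)]
  have hdom : ∀ E, MeasurableSet E → E ⊆ A → (μ E).toReal ≤ v E := fun E hE hEA =>
    ENNReal.toReal_le_of_le_ofReal (hv.nonneg hE) (hle E hE hEA)
  refine ⟨(IsGreatest.csSup_eq ⟨mem_ofPred.2 ⟨μ, hrestr, hfin, hμA, hdom, hμB.symm⟩, ?_⟩).symm,
    μ, hrestr, hfin, hμA, hdom, hμB⟩
  rintro x ⟨ν, -, -, -, hν, rfl⟩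
  exact hν B hB hBA
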